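/- arXiv:0906.2388 — 3 statements merged into one kernel-verified Lean document; each statement's English description precedes it below -/
import Mathlib

section
/- Let P be a generic convex coherent polygon with n ≥ 4 vertices and fix an index i. Then R_{i-1} < R_i if and only if V_{i+1} lies strictly outside the circle C_{i-1}, and R_{i-1} > R_i if and only if V_{i+1} lies strictly inside the circle C_{i-1}. (In the paper's discrete-curvature notation for convex polygons, V_{i-1} ≻ V_i holds exactly when V_{i+1} lies strictly outside C_{i-1}, so the statement reads: V_{i-1} ≻ V_i ⟺ R_{i-1} < R_i and V_{i-1} ≺ V_i ⟺ R_{i-1} > R_i.) -/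
open EuclideanGeometry
open scoped Classical

noncomputable section

/-- The Euclidean plane. -/
abbrev Pt := EuclideanSpace ℝ (Fin 2)

/-- Signed area determinant of the triangle `a b c` (positive iff `a b c` is
counterclockwise, i.e. `c` lies strictly to the left of the directed line `a → b`). -/
def det2 (a b c : Pt) : ℝ :=
  (b 0 - a 0) * (c 1 - a 1) - (b 1 - a 1) * (c 0 - a 0)

/-- The vertices `V 0, V 1, …, V (n-1)` (indices mod `n`) are distinct and in convex
position, listed counterclockwise: every other vertex lies strictly to the left of
each directed edge. -/
def ConvexCCW {n : ℕ} (V : ZMod n → Pt) : Prop :=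
  Function.Injective V ∧
    ∀ i j : ZMod n, j ≠ i → j ≠ i + 1 → 0 < det2 (V i) (V (i + 1)) (V j)

/-- The polygon is generic: no three vertices are collinear and no four vertices lie
on a common circle. -/
def GenericPoly {n : ℕ} (V : ZMod n → Pt) : Prop :=
  (∀ i j k : ZMod n, i ≠ j → j ≠ k → i ≠ k →
      ¬ Collinear ℝ ({V i, V j, V k} : Set Pt)) ∧
  (∀ i j k l : ZMod n, i ≠ j → i ≠ k → i ≠ l → j ≠ k → j ≠ l → k ≠ l →
      ¬ ∃ (O : Pt) (R : ℝ),
        dist (V i) O = R ∧ dist (V j) O = R ∧ dist (V k) O = R ∧ dist (V l) O = R)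

/-- `O i` is the center and `R i` the radius of the circle `C i` through
`V (i-1)`, `V i`, `V (i+1)`. -/
def IsCircumData {n : ℕ} (V O : ZMod n → Pt) (R : ZMod n → ℝ) : Prop :=
  ∀ i : ZMod n,
    dist (V (i - 1)) (O i) = R i ∧ dist (V i) (O i) = R i ∧
      dist (V (i + 1)) (O i) = R i

/-- The polygon is coherent: each circumcenter `O i` lies in the closed infinite cone
with apex `V i` spanned by the rays from `V i` through `V (i-1)` and `V (i+1)`. -/
def Coherent {n : ℕ} (V O : ZMod n → Pt) : Prop :=
  ∀ i : ZMod n, ∃ s t : ℝ, 0 ≤ s ∧ 0 ≤ t ∧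
    O i - V i = s • (V (i - 1) - V i) + t • (V (i + 1) - V i)

/-- `V i` is locally maximal-extremal: `V (i-2)` and `V (i+2)` lie strictly outside `C i`. -/
def LocMax {n : ℕ} (V O : ZMod n → Pt) (R : ZMod n → ℝ) (i : ZMod n) : Prop :=
  R i < dist (V (i - 2)) (O i) ∧ R i < dist (V (i + 2)) (O i)

/-- `V i` is locally minimal-extremal: `V (i-2)` and `V (i+2)` lie strictly inside `C i`. -/
def LocMin {n : ℕ} (V O : ZMod n → Pt) (R : ZMod n → ℝ) (i : ZMod n) : Prop :=
  dist (V (i - 2)) (O i) < R i ∧ dist (V (i + 2)) (O i) < R i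

/-- `V i` is globally maximal-extremal: the open disk bounded by `C i` contains no vertex. -/
def GlobMax {n : ℕ} (V O : ZMod n → Pt) (R : ZMod n → ℝ) (i : ZMod n) : Prop :=
  ∀ j : ZMod n, R i ≤ dist (V j) (O i)

/-- `V i` is globally minimal-extremal: the open disk bounded by `C i` contains every
vertex other than `V (i-1)`, `V i`, `V (i+1)`. -/
def GlobMin {n : ℕ} (V O : ZMod n → Pt) (R : ZMod n → ℝ) (i : ZMod n) : Prop :=
  ∀ j : ZMod n, j ≠ i - 1 → j ≠ i → j ≠ i + 1 → dist (V j) (O i) < R i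

/-- `V i` is radially maximal-extremal: `R (i-1) < R i > R (i+1)`. -/
def RadMax {n : ℕ} (R : ZMod n → ℝ) (i : ZMod n) : Prop :=
  R (i - 1) < R i ∧ R (i + 1) < R i

/-- `V i` is radially minimal-extremal: `R (i-1) > R i < R (i+1)`. -/
def RadMin {n : ℕ} (R : ZMod n → ℝ) (i : ZMod n) : Prop :=
  R i < R (i - 1) ∧ R i < R (i + 1)

end

/-! Write `a = V (i-1)`, `b = V i`, `p = V (i+1)`. The circles `C (i-1)` and `C i` both pass
through `a` and `b`, so their centers lie on the perpendicular bisector of `ab`, and coherence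
puts both centers on the same side of `ab` as `p`. Measure the height of a center `c` above `ab`
by `det2 a b c`. A center of height `h` has radius `R` with `4 |ab|² R² = |ab|⁴ + 4 h²`, and the
power of `p` with respect to `C (i-1)` is `2 ⟪p - a, O i - O (i-1)⟫`, which has the sign of the
difference of the two heights. So both comparisons in the theorem are the comparison of the
heights of `O i` and `O (i-1)`. -/
lemma dist_sq_eq_coords (x y : Pt) : dist x y ^ 2 = (x 0 - y 0) ^ 2 + (x 1 - y 1) ^ 2 := by
  rw [EuclideanSpace.dist_eq, Real.sq_sqrt (by positivity)]
  simp [Fin.sum_univ_two, Real.dist_eq, sq_abs]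

@[simp] lemma det2_self_left (a b : Pt) : det2 a b a = 0 := by simp only [det2]; ring

@[simp] lemma det2_self_right (a b : Pt) : det2 a b b = 0 := by simp only [det2]; ring

lemma det2_eq_of_sub_eq {a b c o d e : Pt} {s t : ℝ} (h : c - o = s • (d - o) + t • (e - o)) :
    det2 a b c = det2 a b o + s * (det2 a b d - det2 a b o) + t * (det2 a b e - det2 a b o) := by
  have h0 : c 0 - o 0 = s * (d 0 - o 0) + t * (e 0 - o 0) := by simpa using congrArg (· 0) h
  have h1 : c 1 - o 1 = s * (d 1 - o 1) + t * (e 1 - o 1) := by simpa using congrArg (· 1) h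
  simp only [det2]
  linear_combination (b 0 - a 0) * h1 - (b 1 - a 1) * h0

lemma det2_nonneg_of_sub_right_eq {a b c p : Pt} {s t : ℝ} (h : c - b = s • (a - b) + t • (p - b))
    (ht : 0 ≤ t) (hp : 0 ≤ det2 a b p) : 0 ≤ det2 a b c := by
  rw [det2_eq_of_sub_eq h]
  simpa using mul_nonneg ht hp

lemma det2_nonneg_of_sub_left_eq {a b c q : Pt} {s t : ℝ} (h : c - a = s • (q - a) + t • (b - a))
    (hs : 0 ≤ s) (hq : 0 ≤ det2 a b q) : 0 ≤ det2 a b c := by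
  rw [det2_eq_of_sub_eq h]
  simpa using mul_nonneg hs hq

lemma four_mul_dist_sq_mul_dist_sq {a b x : Pt} (hx : dist a x = dist b x) :
    4 * dist a b ^ 2 * dist a x ^ 2 = dist a b ^ 4 + 4 * det2 a b x ^ 2 := by
  have hx2 := congrArg (· ^ 2) hx
  rw [show dist a b ^ 4 = (dist a b ^ 2) ^ 2 by ring]
  simp only [dist_sq_eq_coords, det2] at hx2 ⊢
  linear_combination (2 * ((x 0 - a 0) * (b 0 - a 0) + (x 1 - a 1) * (b 1 - a 1))
    + (b 0 - a 0) ^ 2 + (b 1 - a 1) ^ 2) * hx2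

lemma dist_sq_mul_power_eq {a b p x y : Pt} (hx : dist a x = dist b x) (hp : dist p x = dist a x)
    (hy : dist a y = dist b y) :
    dist a b ^ 2 * (dist p y ^ 2 - dist a y ^ 2) = 2 * det2 a b p * (det2 a b x - det2 a b y) := by
  have hx2 := congrArg (· ^ 2) hx
  have hp2 := congrArg (· ^ 2) hp
  have hy2 := congrArg (· ^ 2) hy
  simp only [dist_sq_eq_coords, det2] at hx2 hp2 hy2 ⊢
  -- `hp2` makes the power equal to `2 ⟪p - a, x - y⟫`, and `hx2 - hy2` says `x - y ⟂ b - a`.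
  linear_combination ((b 0 - a 0) ^ 2 + (b 1 - a 1) ^ 2) * hp2
    + ((p 0 - a 0) * (b 0 - a 0) + (p 1 - a 1) * (b 1 - a 1)) * (hx2 - hy2)

section TwoCircles

variable {a b p x y : Pt}

lemma dist_lt_dist_iff_det2_lt (hab : a ≠ b) (hx : dist a x = dist b x)
    (hy : dist a y = dist b y) (hx0 : 0 ≤ det2 a b x) (hy0 : 0 ≤ det2 a b y) :
    dist a y < dist a x ↔ det2 a b y < det2 a b x := by
  have hN : 0 < 4 * dist a b ^ 2 := by have := dist_pos.2 hab; positivity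
  rw [← sq_lt_sq₀ dist_nonneg dist_nonneg, ← mul_lt_mul_iff_of_pos_left hN,
    four_mul_dist_sq_mul_dist_sq hx, four_mul_dist_sq_mul_dist_sq hy, add_lt_add_iff_left,
    mul_lt_mul_iff_of_pos_left four_pos, sq_lt_sq₀ hy0 hx0]

lemma dist_lt_dist_iff_det2_lt_of_concyclic (hx : dist a x = dist b x)
    (hp : dist p x = dist a x) (hy : dist a y = dist b y) (hp0 : 0 < det2 a b p) :
    dist a y < dist p y ↔ det2 a b y < det2 a b x := by
  have hab : a ≠ b := by rintro rfl; simp [det2] at hp0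
  have hN : 0 < dist a b ^ 2 := by have := dist_pos.2 hab; positivity
  rw [← sq_lt_sq₀ dist_nonneg dist_nonneg, ← sub_pos, ← mul_pos_iff_of_pos_left hN,
    dist_sq_mul_power_eq hx hp hy, mul_pos_iff_of_pos_left (by positivity), sub_pos]

lemma dist_lt_dist_iff_det2_lt_of_concyclic' (hx : dist a x = dist b x)
    (hp : dist p x = dist a x) (hy : dist a y = dist b y) (hp0 : 0 < det2 a b p) :
    dist p y < dist a y ↔ det2 a b x < det2 a b y := by
  have hab : a ≠ b := by rintro rfl; simp [det2] at hp0
  have hN : 0 < dist a b ^ 2 := by have := dist_pos.2 hab; positivity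
  have key : dist a b ^ 2 * (dist a y ^ 2 - dist p y ^ 2) =
      2 * det2 a b p * (det2 a b y - det2 a b x) := by
    linear_combination -dist_sq_mul_power_eq hx hp hy
  rw [← sq_lt_sq₀ dist_nonneg dist_nonneg, ← sub_pos, ← mul_pos_iff_of_pos_left hN, key,
    mul_pos_iff_of_pos_left (by positivity), sub_pos]

end TwoCircles

lemma ZMod.natCast_ne_zero_of_pos_of_lt {n k : ℕ} (hk : 0 < k) (hkn : k < n) :
    (k : ZMod n) ≠ 0 := by
  rw [Ne, ZMod.natCast_eq_zero_iff]
  exact fun h => (Nat.le_of_dvd hk h).not_gt hkn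

lemma ConvexCCW.det2_pos {n : ℕ} {V : ZMod n → Pt} (hV : ConvexCCW V) {i j : ZMod n}
    (hj : j ≠ i - 1) (hj' : j ≠ i) : 0 < det2 (V (i - 1)) (V i) (V j) := by
  simpa using hV.2 (i - 1) j hj (by simpa using hj')

theorem radius_compare_iff_outside_inside_general
    (n : ℕ) (hn : 4 ≤ n)
    (V O : ZMod n → Pt) (R : ZMod n → ℝ)
    (hconv : ConvexCCW V) (hcirc : IsCircumData V O R)
    (hcoh : Coherent V O) (i : ZMod n) :
    (R (i - 1) < R i ↔ R (i - 1) < dist (V (i + 1)) (O (i - 1))) ∧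
    (R i < R (i - 1) ↔ dist (V (i + 1)) (O (i - 1)) < R (i - 1)) := by
  have h1 : (1 : ZMod n) ≠ 0 := by
    exact_mod_cast ZMod.natCast_ne_zero_of_pos_of_lt (k := 1) one_pos (by omega)
  have h2 : (2 : ZMod n) ≠ 0 := by
    exact_mod_cast ZMod.natCast_ne_zero_of_pos_of_lt (k := 2) two_pos (by omega)
  obtain ⟨-, hay, hby⟩ := hcirc (i - 1)
  obtain ⟨hax, hbx, hpx⟩ := hcirc i
  obtain ⟨_, t, -, ht, hcone⟩ := hcoh i
  obtain ⟨s, _, hs, -, hcone'⟩ := hcoh (i - 1)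
  rw [sub_add_cancel] at hby
  rw [sub_add_cancel, sub_sub, one_add_one_eq_two] at hcone'
  have hp_left := hconv.det2_pos (j := i + 1) (fun h => h2 (by linear_combination h))
    (fun h => h1 (by linear_combination h))
  have hq_left := hconv.det2_pos (j := i - 2) (fun h => h1 (by linear_combination -h))
    (fun h => h2 (by linear_combination -h))
  have hO_left := det2_nonneg_of_sub_right_eq hcone ht hp_left.le
  have hO'_left := det2_nonneg_of_sub_left_eq hcone' hs hq_left.le
  have hab : V (i - 1) ≠ V i := hconv.1.ne (fun h => h1 (by linear_combination -h))
  have hO := hax.trans hbx.symm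
  have hO' := hay.trans hby.symm
  have hpO := hpx.trans hax.symm
  rw [← hay, ← hax]
  exact ⟨(dist_lt_dist_iff_det2_lt hab hO hO' hO_left hO'_left).trans
      (dist_lt_dist_iff_det2_lt_of_concyclic hO hpO hO' hp_left).symm,
    (dist_lt_dist_iff_det2_lt hab hO' hO hO'_left hO_left).trans
      (dist_lt_dist_iff_det2_lt_of_concyclic' hO hpO hO' hp_left).symm⟩

/-- In a generic convex coherent polygon with at least four vertices:
`R (i-1) < R i` iff `V (i+1)` lies strictly outside the circle `C (i-1)`, and
`R (i-1) > R i` iff `V (i+1)` lies strictly inside the circle `C (i-1)`. -/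
theorem radius_compare_iff_outside_inside
    (n : ℕ) [NeZero n] (hn : 4 ≤ n)
    (V O : ZMod n → Pt) (R : ZMod n → ℝ)
    (hconv : ConvexCCW V) (hgen : GenericPoly V) (hcirc : IsCircumData V O R)
    (hcoh : Coherent V O) (i : ZMod n) :
    (R (i - 1) < R i ↔ R (i - 1) < dist (V (i + 1)) (O (i - 1))) ∧
    (R i < R (i - 1) ↔ dist (V (i + 1)) (O (i - 1)) < R (i - 1)) :=
  radius_compare_iff_outside_inside_general n hn V O R hconv hcirc hcoh i
end

section
/- (Local Four-Vertex Theorem) Every generic convex polygon P with n ≥ 4 vertices has at least four locally extremal vertices; in fact l_-(P) ≥ 2 and l_+(P) ≥ 2. -/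
open EuclideanGeometry
open scoped Classical

/-!
Call a vertex an `ε`-ear (`ε = 1` or `-1`) if the circle through it and its two neighbours has
every other vertex strictly outside (`ε = 1`) or strictly inside (`ε = -1`) it; an ear is locally
maximal- resp. minimal-extremal, so it suffices to find two ears of each kind.

The circles through the ends `A`, `B` of a chord form a pencil along which the power of a point
changes affinely, at a rate proportional to its signed area with `A` and `B`. Suppose a circle of
this pencil has all vertices weakly on its `ε`-side and those of one arc of the chord strictly.
Sliding it until it first meets a vertex `k` of the arc pushes the vertices beyond the chord
strictly to the `ε`-side, and by genericity `k` is the only vertex met. The new circle satisfies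
the same hypothesis for the two sub-arcs cut off by `k`; recursing into a sub-arc that still
contains a vertex ends at an ear inside the original arc. Starting from the arc opposite to the
edge `V (e - 1) V e`, with a huge circle, this gives an ear different from any prescribed `e`.
-/

open Filter

lemma det2_cycle (a b c : Pt) : det2 a b c = det2 b c a := by
  unfold det2; ring

lemma det2_swap (a b c : Pt) : det2 a b c = -det2 b a c := by
  unfold det2; ring

lemma det2_pos_trans {a b p q r : Pt} (hp : 0 < det2 a b p) (hq : 0 < det2 a b q)
    (hr : 0 < det2 a b r) (hpq : 0 < det2 b p q) (hqr : 0 < det2 b q r) : 0 < det2 b p r := by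
  -- a Grassmann–Plücker relation
  have key : det2 a b q * det2 b p r = det2 a b p * det2 b q r + det2 a b r * det2 b p q := by
    unfold det2; ring
  exact pos_of_mul_pos_right (key ▸ by positivity) hq.le

lemma dist_sq_eq (p q : Pt) : dist p q ^ 2 = (p 0 - q 0) ^ 2 + (p 1 - q 1) ^ 2 := by
  rw [EuclideanSpace.dist_eq, Real.sq_sqrt (by positivity), Fin.sum_univ_two,
    Real.dist_eq, Real.dist_eq, sq_abs, sq_abs]

def rot90 (v : Pt) : Pt := !₂[-v 1, v 0]

/-- For `A, B ∈ s`, the circle of the pencil through `A` and `B` whose center is shifted by `t`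
times the quarter-turn of `B - A`. -/
noncomputable def pencilSphere (s : Sphere Pt) (A B : Pt) (t : ℝ) : Sphere Pt where
  center := s.center + t • rot90 (B - A)
  radius := dist A (s.center + t • rot90 (B - A))

section Pencil

variable {s : Sphere Pt} {A : Pt}

lemma power_pencilSphere (hA : A ∈ s) (B p : Pt) (t : ℝ) :
    (pencilSphere s A B t).power p = s.power p - 2 * t * det2 A B p := by
  rw [mem_sphere] at hA
  simp only [Sphere.power, pencilSphere, ← hA, dist_sq_eq, det2, rot90, PiLp.add_apply,
    PiLp.smul_apply, PiLp.sub_apply, smul_eq_mul, Matrix.cons_val_zero, Matrix.cons_val_one]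
  ring

lemma mem_pencilSphere_left (B : Pt) (t : ℝ) : A ∈ pencilSphere s A B t :=
  mem_sphere.2 rfl

lemma mem_pencilSphere_right (hA : A ∈ s) {B : Pt} (hB : B ∈ s) (t : ℝ) :
    B ∈ pencilSphere s A B t := by
  have hr : 0 ≤ s.radius := mem_sphere.1 hA ▸ dist_nonneg
  rw [← Sphere.power_eq_zero_iff_mem_sphere dist_nonneg, power_pencilSphere hA,
    (Sphere.power_eq_zero_iff_mem_sphere hr).2 hB]
  unfold det2
  ring

lemma exists_pencilSphere_forall_pos (hA : A ∈ s) (B : Pt) {ε : ℝ} (hε : ε ≠ 0)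
    {ι : Type*} (S : Finset ι) (q : ι → Pt) (hdet : ∀ j ∈ S, 0 < det2 A B (q j)) :
    ∃ t, ∀ j ∈ S, 0 < ε * (pencilSphere s A B t).power (q j) := by
  have : ∀ᶠ T in atTop, ∀ j ∈ S, 0 < ε * (pencilSphere s A B (-(ε * T))).power (q j) := by
    refine (eventually_all_finset S).2 fun j hj => ?_
    have hlin : Tendsto (fun T => ε * s.power (q j) + 2 * ε ^ 2 * det2 A B (q j) * T)
        atTop atTop :=
      tendsto_atTop_add_const_left _ _
        (tendsto_id.const_mul_atTop (by have := hdet j hj; positivity))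
    filter_upwards [hlin.eventually_gt_atTop 0] with T hT
    rw [power_pencilSphere hA]
    linear_combination hT
  exact ⟨_, this.exists.choose_spec⟩

lemma exists_pencilSphere_touching (hA : A ∈ s) (B : Pt) {ε : ℝ} {ι : Type*} {S : Finset ι}
    (hS : S.Nonempty) {q : ι → Pt} (hdet : ∀ j ∈ S, 0 < det2 A B (q j))
    (hpos : ∀ j ∈ S, 0 < ε * s.power (q j)) :
    ∃ k ∈ S, ∃ t, 0 < ε * t ∧ (pencilSphere s A B t).power (q k) = 0 ∧
      ∀ j ∈ S, 0 ≤ ε * (pencilSphere s A B t).power (q j) := by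
  obtain ⟨k, hk, hmin⟩ := S.exists_min_image (fun j => ε * s.power (q j) / det2 A B (q j)) hS
  have hdk := hdet k hk
  refine ⟨k, hk, s.power (q k) / (2 * det2 A B (q k)), ?_, ?_, fun j hj => ?_⟩
  · rw [← mul_div_assoc]
    exact div_pos (hpos k hk) (by positivity)
  · rw [power_pencilSphere hA]
    field_simp
    ring
  · have hdj := hdet j hj
    have h := hmin j hj
    rw [div_le_div_iff₀ hdk hdj] at h
    rw [power_pencilSphere hA]
    have : ε * (s.power (q j) - 2 * (s.power (q k) / (2 * det2 A B (q k))) * det2 A B (q j))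
        = (ε * s.power (q j) * det2 A B (q k) - ε * s.power (q k) * det2 A B (q j))
          / det2 A B (q k) := by
      field_simp
    rw [this]
    exact div_nonneg (by linarith) hdk.le

end Pencil

def IsCCWChain (W : ℕ → Pt) (m : ℕ) : Prop :=
  ∀ i j k, i < j → j < k → k ≤ m → 0 < det2 (W i) (W j) (W k)

def NoFourConcyclic (W : ℕ → Pt) (m : ℕ) : Prop :=
  ∀ (s : Sphere Pt) (i j k l : ℕ), i < j → j < k → k < l → l ≤ m →
    W i ∈ s → W j ∈ s → W k ∈ s → W l ∈ s → False

/-- `ε = 1`: all other vertices strictly outside `s`; `ε = -1`: strictly inside. -/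
def IsExtremalCircle (ε : ℝ) (W : ℕ → Pt) (m j : ℕ) (s : Sphere Pt) : Prop :=
  W (j - 1) ∈ s ∧ W j ∈ s ∧ W (j + 1) ∈ s ∧
    ∀ k ≤ m, k ≠ j - 1 → k ≠ j → k ≠ j + 1 → 0 < ε * s.power (W k)

section ConvexChain

variable {W : ℕ → Pt} {m : ℕ} {ε : ℝ}

lemma det2_pos_of_edges
    (hedge : ∀ i < m, ∀ j ≤ m, j ≠ i → j ≠ i + 1 → 0 < det2 (W i) (W (i + 1)) (W j))
    (hclose : ∀ j, 0 < j → j < m → 0 < det2 (W m) (W 0) (W j))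
    {p q : ℕ} (hp : 0 < p) (hpq : p < q) (hqm : q ≤ m) : 0 < det2 (W 0) (W p) (W q) := by
  induction q, hpq using Nat.le_induction with
  | base =>
    rw [det2_cycle]
    exact hedge p (by omega) 0 (by omega) (by omega) (by omega)
  | succ q hq IH =>
    by_cases hqm' : q + 1 = m
    · rw [hqm', ← det2_cycle]
      exact hclose p hp (by omega)
    · refine det2_pos_trans (hclose p hp (by omega)) (hclose q (by omega) (by omega))
        (hclose (q + 1) (by omega) (by omega)) (IH (by omega)) ?_
      rw [det2_cycle]
      exact hedge q (by omega) 0 (by omega) (by omega) (by omega)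

lemma IsCCWChain.det2_neg (hccw : IsCCWChain W m) {a b j : ℕ} (hab : a < b) (hbm : b ≤ m)
    (hjm : j ≤ m) (hj : j < a ∨ b < j) : det2 (W b) (W a) (W j) < 0 := by
  rw [det2_swap]
  rcases hj with hj | hj
  · have := hccw j a b hj hab hbm
    rw [det2_cycle] at this
    linarith
  · linarith [hccw a b j hab hj hjm]

lemma IsCCWChain.exists_circle_touching_arc (hccw : IsCCWChain W m) (hgen : NoFourConcyclic W m)
    {a b : ℕ} (hab : a + 2 ≤ b) (hbm : b ≤ m) {s : Sphere Pt} (ha : W a ∈ s)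
    (hb : W b ∈ s) (hin : ∀ j, a < j → j < b → 0 < ε * s.power (W j))
    (hout : ∀ j ≤ m, j < a ∨ b < j → 0 ≤ ε * s.power (W j)) :
    ∃ k, a < k ∧ k < b ∧ ∃ s' : Sphere Pt, W a ∈ s' ∧ W b ∈ s' ∧ W k ∈ s' ∧
      ∀ j ≤ m, j ≠ a → j ≠ b → j ≠ k → 0 < ε * s'.power (W j) := by
  have hdet : ∀ j ∈ Finset.Ioo a b, 0 < det2 (W b) (W a) (W j) := fun j hj => by
    rw [Finset.mem_Ioo] at hj
    rw [det2_cycle]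
    exact hccw a j b hj.1 hj.2 hbm
  obtain ⟨k, hk, t, hεt, hks, hS⟩ := exists_pencilSphere_touching hb (W a)
    ⟨a + 1, Finset.mem_Ioo.2 ⟨by omega, by omega⟩⟩ hdet
    (fun j hj => hin j (Finset.mem_Ioo.1 hj).1 (Finset.mem_Ioo.1 hj).2)
  set s' := pencilSphere s (W b) (W a) t
  have hmem : ∀ {j}, s'.power (W j) = 0 → W j ∈ s' :=
    (Sphere.power_eq_zero_iff_mem_sphere dist_nonneg).1
  rw [Finset.mem_Ioo] at hk
  refine ⟨k, hk.1, hk.2, s', mem_pencilSphere_right hb ha t, mem_pencilSphere_left _ t,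
    hmem hks, fun j hjm hja hjb hjk => ?_⟩
  by_cases hj : a < j ∧ j < b
  · refine (hS j (Finset.mem_Ioo.2 hj)).lt_of_ne fun h => ?_
    have hjs : W j ∈ s' :=
      hmem ((mul_eq_zero.1 h.symm).resolve_left (by rintro rfl; simp at hεt))
    have hbs : W b ∈ s' := mem_pencilSphere_left _ t
    have has : W a ∈ s' := mem_pencilSphere_right hb ha t
    rcases lt_or_gt_of_ne hjk with hjk | hjk
    · exact hgen s' a j k b hj.1 hjk hk.2 hbm has hjs (hmem hks) hbs
    · exact hgen s' a k j b hk.1 hjk hj.2 hbm has (hmem hks) hjs hbs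
  · have hj' : j < a ∨ b < j := by omega
    have hneg := hccw.det2_neg (by omega) hbm hjm hj'
    rw [power_pencilSphere hb]
    nlinarith [hout j hjm hj']

lemma IsCCWChain.exists_extremalCircle_in_arc (hccw : IsCCWChain W m)
    (hgen : NoFourConcyclic W m) {a b : ℕ} (hab : a + 2 ≤ b) (hbm : b ≤ m) {s : Sphere Pt}
    (ha : W a ∈ s) (hb : W b ∈ s) (hin : ∀ j, a < j → j < b → 0 < ε * s.power (W j))
    (hout : ∀ j ≤ m, j < a ∨ b < j → 0 ≤ ε * s.power (W j)) :
    ∃ j, a < j ∧ j < b ∧ ∃ s, IsExtremalCircle ε W m j s := by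
  induction hd : b - a using Nat.strong_induction_on generalizing a b s with
  | _ d IH =>
  obtain ⟨k, hak, hkb, s', ha', hb', hk', hs'⟩ :=
    hccw.exists_circle_touching_arc hgen hab hbm ha hb hin hout
  have hon : ∀ {j}, W j ∈ s' → 0 ≤ ε * s'.power (W j) := fun h => by
    rw [(Sphere.power_eq_zero_iff_mem_sphere (mem_sphere.1 ha' ▸ dist_nonneg)).2 h, mul_zero]
  by_cases hleft : a + 2 ≤ k
  · obtain ⟨j, h1, h2, hj⟩ := IH (k - a) (by omega) hleft (by omega) ha' hk'
      (fun j h1 h2 => hs' j (by omega) (by omega) (by omega) (by omega))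
      (fun j hjm hj => (eq_or_ne j b).elim (fun h => h ▸ hon hb')
        fun h => (hs' j hjm (by omega) h (by omega)).le) rfl
    exact ⟨j, h1, by omega, hj⟩
  by_cases hright : k + 2 ≤ b
  · obtain ⟨j, h1, h2, hj⟩ := IH (b - k) (by omega) hright hbm hk' hb'
      (fun j h1 h2 => hs' j (by omega) (by omega) (by omega) (by omega))
      (fun j hjm hj => (eq_or_ne j a).elim (fun h => h ▸ hon ha')
        fun h => (hs' j hjm h (by omega) (by omega)).le) rfl
    exact ⟨j, by omega, h2, hj⟩
  obtain rfl : a = k - 1 := by omega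
  obtain rfl : b = k + 1 := by omega
  exact ⟨k, hak, hkb, s', ha', hk', hb', fun j hjm h1 h2 h3 => hs' j hjm h1 h3 h2⟩

lemma IsCCWChain.exists_extremalCircle (hccw : IsCCWChain W m) (hgen : NoFourConcyclic W m)
    (hε : ε ≠ 0) (hm : 2 ≤ m) :
    ∃ j, 0 < j ∧ j < m ∧ ∃ s, IsExtremalCircle ε W m j s := by
  set s₀ : Sphere Pt := ⟨midpoint ℝ (W m) (W 0), dist (W m) (midpoint ℝ (W m) (W 0))⟩
  have h₀ : W m ∈ s₀ := mem_sphere.2 rfl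
  have h₁ : W 0 ∈ s₀ := mem_sphere.2 (by simp [s₀])
  obtain ⟨t, ht⟩ := exists_pencilSphere_forall_pos h₀ (W 0) hε (Finset.Ioo 0 m) W
    fun j hj => by
      rw [Finset.mem_Ioo] at hj
      rw [det2_cycle]
      exact hccw 0 j m hj.1 hj.2 le_rfl
  exact hccw.exists_extremalCircle_in_arc hgen (by omega) le_rfl
    (mem_pencilSphere_right h₀ h₁ t) (mem_pencilSphere_left _ t)
    (fun j h1 h2 => ht j (Finset.mem_Ioo.2 ⟨h1, h2⟩)) (fun j hjm hj => by omega)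

end ConvexChain

lemma natCast_ne_zero_of_lt {n c : ℕ} (h0 : 0 < c) (h : c < n) : (c : ZMod n) ≠ 0 := by
  rw [Ne, ZMod.natCast_eq_zero_iff]
  exact fun hdvd => absurd (Nat.le_of_dvd h0 hdvd) (by omega)

lemma add_natCast_ne_add_natCast {n : ℕ} (e : ZMod n) {i j : ℕ} (hi : i < n) (hj : j < n)
    (h : i ≠ j) : e + i ≠ e + j := by
  rwa [Ne, add_right_inj, ZMod.natCast_eq_natCast_iff', Nat.mod_eq_of_lt hi, Nat.mod_eq_of_lt hj]

lemma sub_two_and_add_two_of_forall_ne {n : ℕ} (hn : 4 ≤ n) {i : ZMod n} {P : ZMod n → Prop}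
    (h : ∀ k, k ≠ i - 1 → k ≠ i → k ≠ i + 1 → P k) : P (i - 2) ∧ P (i + 2) := by
  have h1 : (1 : ZMod n) ≠ 0 := mod_cast natCast_ne_zero_of_lt (c := 1) one_pos (by omega)
  have h2 : (2 : ZMod n) ≠ 0 := mod_cast natCast_ne_zero_of_lt (c := 2) two_pos (by omega)
  have h3 : (3 : ZMod n) ≠ 0 := mod_cast natCast_ne_zero_of_lt (c := 3) three_pos (by omega)
  exact ⟨h _ (fun e => h1 (by linear_combination -e)) (fun e => h2 (by linear_combination -e))
      (fun e => h3 (by linear_combination -e)),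
    h _ (fun e => h3 (by linear_combination e)) (fun e => h2 (by linear_combination e))
      (fun e => h1 (by linear_combination e))⟩

lemma two_le_ncard_of_forall_exists_ne {α : Type*} [Finite α] [Nonempty α] {P : α → Prop}
    (h : ∀ a, ∃ b ≠ a, P b) : 2 ≤ {b | P b}.ncard := by
  obtain ⟨b₁, -, h₁⟩ := h (Classical.arbitrary α)
  obtain ⟨b₂, h₂₁, h₂⟩ := h b₁
  exact (Set.one_lt_ncard_iff (Set.toFinite _)).2 ⟨b₂, b₁, h₂, h₁, h₂₁⟩

section Polygon

variable {n : ℕ} {V : ZMod n → Pt} {O : ZMod n → Pt} {R : ZMod n → ℝ}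

lemma natCast_pred_add_one [NeZero n] : ((n - 1 : ℕ) : ZMod n) + 1 = 0 := by
  rw [Nat.cast_sub NeZero.one_le, Nat.cast_one, sub_add_cancel, ZMod.natCast_self]

lemma ConvexCCW.det2_pos_of_lt [NeZero n] (hconv : ConvexCCW V) (e : ZMod n) {p q : ℕ}
    (hp : 0 < p) (hpq : p < q) (hq : q < n) : 0 < det2 (V e) (V (e + p)) (V (e + q)) := by
  have hne : ∀ {i j : ℕ}, i < n → j < n → i ≠ j → e + (i : ZMod n) ≠ e + j :=
    add_natCast_ne_add_natCast e
  have := det2_pos_of_edges (W := fun k : ℕ => V (e + k)) (m := n - 1) ?_ ?_ hp hpq (by omega)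
  · simpa using this
  · intro i hi j hj hji hji1
    have hcast : e + i + 1 = e + ((i + 1 : ℕ) : ZMod n) := by push_cast; ring
    have := hconv.2 (e + i) (e + j) (hne (by omega) (by omega) hji)
      (hcast ▸ hne (by omega) (by omega) hji1)
    rwa [hcast] at this
  · intro j hj0 hjm
    have hcast : e + ((n - 1 : ℕ) : ZMod n) + 1 = e + ((0 : ℕ) : ZMod n) := by
      rw [add_assoc, natCast_pred_add_one, Nat.cast_zero]
    have := hconv.2 (e + (n - 1 : ℕ)) (e + j) (hne (by omega) (by omega) (by omega))
      (hcast ▸ hne (by omega) (by omega) (by omega))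
    rwa [hcast] at this

lemma ConvexCCW.isCCWChain [NeZero n] (hconv : ConvexCCW V) (e : ZMod n) :
    IsCCWChain (fun k : ℕ => V (e + k)) (n - 1) := by
  intro i j k hij hjk hkm
  have hcast : ∀ l, i ≤ l → e + i + ((l - i : ℕ) : ZMod n) = e + l := fun l hl => by
    rw [Nat.cast_sub hl]; ring
  have := hconv.det2_pos_of_lt (e + i) (p := j - i) (q := k - i) (by omega) (by omega) (by omega)
  rwa [hcast j hij.le, hcast k (by omega)] at this

lemma GenericPoly.noFourConcyclic (hgen : GenericPoly V) (e : ZMod n) :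
    NoFourConcyclic (fun k : ℕ => V (e + k)) (n - 1) := by
  intro s i j k l hij hjk hkl hlm hi hj hk hl
  have hne : ∀ {i j : ℕ}, i < n → j < n → i ≠ j → e + (i : ZMod n) ≠ e + j :=
    add_natCast_ne_add_natCast e
  refine hgen.2 (e + i) (e + j) (e + k) (e + l) ?_ ?_ ?_ ?_ ?_ ?_
    ⟨s.center, s.radius, hi, hj, hk, hl⟩ <;> exact hne (by omega) (by omega) (by omega)

lemma ConvexCCW.eq_circumsphere (hn : 3 ≤ n) (hconv : ConvexCCW V) (hcirc : IsCircumData V O R)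
    {i : ZMod n} {s : Sphere Pt} (h₁ : V (i - 1) ∈ s) (h₂ : V i ∈ s)
    (h₃ : V (i + 1) ∈ s) :
    s = ⟨O i, R i⟩ := by
  have h1 : (1 : ZMod n) ≠ 0 := mod_cast natCast_ne_zero_of_lt (c := 1) one_pos (by omega)
  have h2 : (2 : ZMod n) ≠ 0 := mod_cast natCast_ne_zero_of_lt (c := 2) two_pos (by omega)
  obtain ⟨c₁, c₂, c₃⟩ := hcirc i
  by_contra hs
  rcases eq_of_mem_sphere_of_mem_sphere_of_finrank_eq_two finrank_euclideanSpace_fin hs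
    (hconv.1.ne fun h => h1 (by linear_combination -h)) h₁ h₂ h₃ c₁ c₂ c₃ with h | h
  · exact h2 (by linear_combination hconv.1 h)
  · exact h1 (by linear_combination hconv.1 h)

lemma ConvexCCW.exists_ne_forall_power_pos [NeZero n] (hn : 3 ≤ n) (hconv : ConvexCCW V)
    (hgen : GenericPoly V) (hcirc : IsCircumData V O R) {ε : ℝ} (hε : ε ≠ 0) (e : ZMod n) :
    ∃ i ≠ e, ∀ k, k ≠ i - 1 → k ≠ i → k ≠ i + 1 →
      0 < ε * (⟨O i, R i⟩ : Sphere Pt).power (V k) := by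
  obtain ⟨j, hj0, hjm, s, h₁, h₂, h₃, hs⟩ :=
    (hconv.isCCWChain e).exists_extremalCircle (hgen.noFourConcyclic e) hε (by omega)
  have hsub : e + ((j - 1 : ℕ) : ZMod n) = e + j - 1 := by rw [Nat.cast_sub hj0]; ring
  have hadd : e + ((j + 1 : ℕ) : ZMod n) = e + j + 1 := by push_cast; ring
  simp only [hsub, hadd] at h₁ h₃
  obtain rfl := hconv.eq_circumsphere hn hcirc h₁ h₂ h₃
  refine ⟨e + j, by simpa using natCast_ne_zero_of_lt hj0 (by omega),
    fun k hk₁ hk₂ hk₃ => ?_⟩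
  have hk : e + (((k - e).val : ℕ) : ZMod n) = k := by rw [ZMod.natCast_zmod_val]; ring
  have := hs (k - e).val (by have := ZMod.val_lt (k - e); omega)
    (fun h => hk₁ (by rw [← hk, h, hsub])) (fun h => hk₂ (by rw [← hk, h]))
    (fun h => hk₃ (by rw [← hk, h, hadd]))
  simpa only [hk] using this

lemma ConvexCCW.exists_ne_locMax [NeZero n] (hn : 4 ≤ n) (hconv : ConvexCCW V)
    (hgen : GenericPoly V) (hcirc : IsCircumData V O R) (e : ZMod n) :
    ∃ i ≠ e, LocMax V O R i := by
  obtain ⟨i, hie, hi⟩ := hconv.exists_ne_forall_power_pos (by omega) hgen hcirc one_ne_zero e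
  have hR : 0 ≤ R i := (hcirc i).2.1 ▸ dist_nonneg
  simp only [one_mul, Sphere.power_pos_iff_radius_lt_dist_center (s := ⟨O i, R i⟩) hR] at hi
  exact ⟨i, hie, sub_two_and_add_two_of_forall_ne hn hi⟩

lemma ConvexCCW.exists_ne_locMin [NeZero n] (hn : 4 ≤ n) (hconv : ConvexCCW V)
    (hgen : GenericPoly V) (hcirc : IsCircumData V O R) (e : ZMod n) :
    ∃ i ≠ e, LocMin V O R i := by
  obtain ⟨i, hie, hi⟩ := hconv.exists_ne_forall_power_pos (by omega) hgen hcirc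
    (neg_ne_zero.2 one_ne_zero) e
  have hR : 0 ≤ R i := (hcirc i).2.1 ▸ dist_nonneg
  simp only [neg_one_mul, neg_pos,
    Sphere.power_neg_iff_dist_center_lt_radius (s := ⟨O i, R i⟩) hR] at hi
  exact ⟨i, hie, sub_two_and_add_two_of_forall_ne hn hi⟩

end Polygon

/-- Local Four-Vertex Theorem: every generic convex polygon with at least four vertices
has at least two locally maximal-extremal and two locally minimal-extremal vertices,
hence at least four locally extremal vertices. -/
theorem local_four_vertex
    (n : ℕ) [NeZero n] (hn : 4 ≤ n)
    (V O : ZMod n → Pt) (R : ZMod n → ℝ)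
    (hconv : ConvexCCW V) (hgen : GenericPoly V) (hcirc : IsCircumData V O R) :
    2 ≤ {i : ZMod n | LocMax V O R i}.ncard ∧
    2 ≤ {i : ZMod n | LocMin V O R i}.ncard ∧
    4 ≤ {i : ZMod n | LocMax V O R i ∨ LocMin V O R i}.ncard := by
  have hmax := two_le_ncard_of_forall_exists_ne (hconv.exists_ne_locMax hn hgen hcirc)
  have hmin := two_le_ncard_of_forall_exists_ne (hconv.exists_ne_locMin hn hgen hcirc)
  have hdisj : Disjoint {i | LocMax V O R i} {i | LocMin V O R i} :=
    Set.disjoint_left.2 fun i hmax hmin => (hmax.1.trans hmin.1).false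
  refine ⟨hmax, hmin, ?_⟩
  rw [Set.ofPred_or, Set.ncard_union_eq hdisj]
  omega
end

section
/- Let A, B, C, X′ be four points in the Euclidean plane ℝ² in generic arrangement (no three of them collinear and not all four on a common circle). Let C_B be the circle through A, B, C, let C_A be the circle through X′, A, B, let H⁺_{AB} be the open half-plane bounded by the line AB that contains C, and let H⁻_{AB} be the opposite open half-plane. Then: (i) if X′ lies strictly inside C_B and in H⁺_{AB}, then C lies strictly outside C_A; (ii) if X′ lies in H⁺_{AB} and strictly outside C_B, then C lies strictly inside C_A; (iii) if X′ lies strictly inside C_B and in H⁻_{AB}, then C lies strictly inside C_A; (iv) if X′ lies in H⁻_{AB} and strictly outside C_B, then C lies strictly outside C_A. -/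
open EuclideanGeometry
open scoped Classical

/-!
For two circles through `A` and `B`, the difference of the powers of a point with respect to
them is an affine function vanishing at `A` and `B`, hence a multiple of `det2 A B ·`.
Comparing its values at `C ∈ C_B` and `X' ∈ C_A` gives
`det2 A B C * C_B.power X' = - det2 A B X' * C_A.power C`, and the four cases are the sign rules
of this identity.
-/

lemma EuclideanGeometry.Sphere.power_eq_coord (s : Sphere Pt) (p : Pt) :
    s.power p = (p 0 - s.center 0) ^ 2 + (p 1 - s.center 1) ^ 2 - s.radius ^ 2 := by
  simp [Sphere.power, EuclideanSpace.dist_sq_eq, Fin.sum_univ_two, Real.dist_eq, sq_abs]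

lemma EuclideanGeometry.Sphere.power_eq_zero_of_mem {P : Type*} [MetricSpace P] {s : Sphere P}
    {p : P} (hp : p ∈ s) : s.power p = 0 := by
  rw [Sphere.power, mem_sphere.mp hp, sub_self]

lemma det2_mul_power_sub_power {s t : Sphere Pt} {A B : Pt} (hAs : A ∈ s) (hBs : B ∈ s)
    (hAt : A ∈ t) (hBt : B ∈ t) (P Q : Pt) :
    det2 A B P * (s.power Q - t.power Q) = det2 A B Q * (s.power P - t.power P) := by
  have eAs := Sphere.power_eq_zero_of_mem hAs
  have eBs := Sphere.power_eq_zero_of_mem hBs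
  have eAt := Sphere.power_eq_zero_of_mem hAt
  have eBt := Sphere.power_eq_zero_of_mem hBt
  -- `f = s.power - t.power` is affine, so
  -- `det2 B P Q * f A - det2 A P Q * f B + det2 A B Q * f P - det2 A B P * f Q = 0`.
  linear_combination (norm := skip) det2 B P Q * (eAs - eAt) - det2 A P Q * (eBs - eBt)
  simp only [Sphere.power_eq_coord, det2]
  ring

lemma sign_rules_of_mul_eq_neg_sq_mul {t p b q : ℝ} (h : t * p = -(b ^ 2 * q)) :
    (p < 0 → 0 < t → 0 < q) ∧ (0 < t → 0 < p → q < 0) ∧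
    (p < 0 → t < 0 → q < 0) ∧ (t < 0 → 0 < p → 0 < q) := by
  refine ⟨fun hp ht => ?_, fun ht hp => ?_, fun hp ht => ?_, fun ht hp => ?_⟩ <;>
    nlinarith [sq_nonneg b]

theorem circle_halfplane_prop_general
    (A B C X' OB OA : Pt) (RB RA : ℝ)
    (hB : dist A OB = RB ∧ dist B OB = RB ∧ dist C OB = RB)
    (hA : dist X' OA = RA ∧ dist A OA = RA ∧ dist B OA = RA) :
    (dist X' OB < RB → 0 < det2 A B C * det2 A B X' → RA < dist C OA) ∧
    (0 < det2 A B C * det2 A B X' → RB < dist X' OB → dist C OA < RA) ∧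
    (dist X' OB < RB → det2 A B C * det2 A B X' < 0 → dist C OA < RA) ∧
    (det2 A B C * det2 A B X' < 0 → RB < dist X' OB → RA < dist C OA) := by
  obtain ⟨hA_CB, hB_CB, hC_CB⟩ := hB
  obtain ⟨hX_CA, hA_CA, hB_CA⟩ := hA
  let CB : Sphere Pt := ⟨OB, RB⟩
  let CA : Sphere Pt := ⟨OA, RA⟩
  have key : (det2 A B C * det2 A B X') * CB.power X' = -(det2 A B X' ^ 2 * CA.power C) := by
    have h := det2_mul_power_sub_power (s := CB) (t := CA) hA_CB hB_CB hA_CA hB_CA C X'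
    rw [Sphere.power_eq_zero_of_mem (s := CB) hC_CB,
      Sphere.power_eq_zero_of_mem (s := CA) hX_CA] at h
    linear_combination det2 A B X' * h
  have hRB : 0 ≤ RB := hA_CB ▸ dist_nonneg
  have hRA : 0 ≤ RA := hX_CA ▸ dist_nonneg
  simpa only [Sphere.power_neg_iff_dist_center_lt_radius (s := CB) hRB,
    Sphere.power_pos_iff_radius_lt_dist_center (s := CB) hRB,
    Sphere.power_neg_iff_dist_center_lt_radius (s := CA) hRA,
    Sphere.power_pos_iff_radius_lt_dist_center (s := CA) hRA]
    using sign_rules_of_mul_eq_neg_sq_mul key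

/-- Proposition on circles: let `A B C X'` be four points in generic arrangement, `C_B`
the circle (center `OB`, radius `RB`) through `A, B, C`, and `C_A` the circle (center
`OA`, radius `RA`) through `X', A, B`.  Writing membership in the open half-plane
`H⁺_{AB}` (the side of line `AB` containing `C`) as `0 < det2 A B C * det2 A B X'`:
(i) `X'` inside `C_B` and in `H⁺` implies `C` outside `C_A`;
(ii) `X'` in `H⁺` and outside `C_B` implies `C` inside `C_A`;
(iii) `X'` inside `C_B` and in `H⁻` implies `C` inside `C_A`;
(iv) `X'` in `H⁻` and outside `C_B` implies `C` outside `C_A`. -/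
theorem circle_halfplane_prop
    (A B C X' OB OA : Pt) (RB RA : ℝ)
    (h1 : ¬ Collinear ℝ ({A, B, C} : Set Pt))
    (h2 : ¬ Collinear ℝ ({A, B, X'} : Set Pt))
    (h3 : ¬ Collinear ℝ ({A, C, X'} : Set Pt))
    (h4 : ¬ Collinear ℝ ({B, C, X'} : Set Pt))
    (h5 : ¬ ∃ (O : Pt) (R : ℝ),
        dist A O = R ∧ dist B O = R ∧ dist C O = R ∧ dist X' O = R)
    (hB : dist A OB = RB ∧ dist B OB = RB ∧ dist C OB = RB)
    (hA : dist X' OA = RA ∧ dist A OA = RA ∧ dist B OA = RA) :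
    (dist X' OB < RB → 0 < det2 A B C * det2 A B X' → RA < dist C OA) ∧
    (0 < det2 A B C * det2 A B X' → RB < dist X' OB → dist C OA < RA) ∧
    (dist X' OB < RB → det2 A B C * det2 A B X' < 0 → dist C OA < RA) ∧
    (det2 A B C * det2 A B X' < 0 → RB < dist X' OB → RA < dist C OA) :=
  circle_halfplane_prop_general A B C X' OB OA RB RA hB hA
end
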